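/- arXiv:1104.4415 — 2 statements merged into one kernel-verified Lean document; each statement's English description precedes it below -/
import Mathlib

section
/- Let d ≥ 2, let H = (V, E) be a d-sparse finite graph with at least one edge, let 𝒳 be its d-critical cover, and suppose every d-critical component of H has at least d + 2 vertices. Then Σ_{U ∈ Θ_1(𝒳)} d_𝒳(U) < 2d · |𝒳|. -/
/-!
Call `X` tight when `i(X) + (d+1).choose 2 = d|X|`. For a family `𝒜` of tight sets in a `d`-sparse
graph, the edges lying in some member all lie in the union of the members, which is sparse; counting
incidences then gives `d ∑_v (d_𝒜(v) - 1)⁺ ≤ (d+1).choose 2 (|𝒜| - 1) + ∑_e (d_𝒜(e) - 1)⁺`.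

Applied to the components containing a fixed `k`-set `T` and summed over all `T`, this gives a
three-term recurrence for `E_k = ∑_{|T| = k} (d_𝒳(T) - 1)⁺`. Two components share fewer than `d`
vertices, since otherwise their union would be tight, so `E_k = 0` for `k ≥ d`, and downward
induction yields `(k+1) E_{k+1} ≤ (d-k) E_k`. At `k = 0` this reads `E_1 ≤ d(|𝒳| - 1)`, and every
`1`-hinge `U` has `d_𝒳(U) ≤ 2(d_𝒳(U) - 1)`.
-/

open Finset
open scoped Classical

variable {α : Type*} [DecidableEq α]

/-- The set of edges of `E` with both endpoints in `X`. -/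
noncomputable def inducedEdges (E : Finset (Sym2 α)) (X : Finset α) : Finset (Sym2 α) :=
  E.filter fun e => ∀ v ∈ e, v ∈ X

/-- `i_G(X)`: the number of edges of `E` with both endpoints in `X`. -/
noncomputable def iG (E : Finset (Sym2 α)) (X : Finset α) : ℕ :=
  (inducedEdges E X).card

/-- `E` is a valid edge set on the vertex set `V`: edges are loopless and join vertices of `V`. -/
def ValidOn (V : Finset α) (E : Finset (Sym2 α)) : Prop :=
  ∀ e ∈ E, ¬ e.IsDiag ∧ ∀ v ∈ e, v ∈ V

/-- The graph `(V, E)` is `d`-sparse: every `X ⊆ V` with `|X| ≥ d` satisfies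
`i(X) ≤ d|X| - (d+1 choose 2)`. -/
noncomputable def Sparse (d : ℕ) (V : Finset α) (E : Finset (Sym2 α)) : Prop :=
  ∀ X ⊆ V, d ≤ X.card → iG E X + Nat.choose (d + 1) 2 ≤ d * X.card

/-- `(U, F)` is a subgraph of `(V, E)`. -/
def IsSubgraph (V : Finset α) (E : Finset (Sym2 α)) (U : Finset α) (F : Finset (Sym2 α)) :
    Prop :=
  U ⊆ V ∧ F ⊆ E ∧ ∀ e ∈ F, ∀ v ∈ e, v ∈ U

/-- The graph `(U, F)` is `d`-critical: either `|U| = 2` and `|F| = 1`, or `|U| ≥ d + 2` and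
`|F| = d|U| - (d+1 choose 2)`. -/
def Critical (d : ℕ) (U : Finset α) (F : Finset (Sym2 α)) : Prop :=
  (U.card = 2 ∧ F.card = 1) ∨
  (d + 2 ≤ U.card ∧ F.card + Nat.choose (d + 1) 2 = d * U.card)

/-- `(U, F)` is a `d`-critical subgraph of `(V, E)`. -/
def CritSubgraph (d : ℕ) (V : Finset α) (E : Finset (Sym2 α)) (U : Finset α)
    (F : Finset (Sym2 α)) : Prop :=
  IsSubgraph V E U F ∧ Critical d U F

/-- `(U, F)` is a `d`-critical component of `(V, E)`: a `d`-critical subgraph not properly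
contained in any other `d`-critical subgraph. -/
def CritComponent (d : ℕ) (V : Finset α) (E : Finset (Sym2 α)) (U : Finset α)
    (F : Finset (Sym2 α)) : Prop :=
  CritSubgraph d V E U F ∧
  ∀ U' F', CritSubgraph d V E U' F' → U ⊆ U' → F ⊆ F' → U = U' ∧ F = F'

/-- The `d`-critical cover of `(V, E)`: the family of vertex sets of its `d`-critical
components. -/
noncomputable def critCover (d : ℕ) (V : Finset α) (E : Finset (Sym2 α)) :
    Finset (Finset α) :=
  V.powerset.filter fun U => ∃ F, CritComponent d V E U F

/-- `d_𝒳(W)`: the number of members of the family `𝒳` containing `W`. -/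
def degX (𝒳 : Finset (Finset α)) (W : Finset α) : ℕ :=
  (𝒳.filter fun X => W ⊆ X).card

/-- `Θ_k(𝒳)`: the set of `k`-hinges of `𝒳`, i.e. `k`-element subsets of `V` lying in at least
two members of `𝒳`.  (For `k = 0` this is `{∅}` exactly when `|𝒳| ≥ 2`.) -/
noncomputable def theta (V : Finset α) (𝒳 : Finset (Finset α)) (k : ℕ) :
    Finset (Finset α) :=
  V.powerset.filter fun W => W.card = k ∧ 2 ≤ degX 𝒳 W

/-- `𝒳` is a cover of `(V, E)`: every member has at least two vertices and every edge is
induced by some member. -/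
def IsCover (E : Finset (Sym2 α)) (𝒳 : Finset (Finset α)) : Prop :=
  (∀ X ∈ 𝒳, 2 ≤ X.card) ∧ ∀ e ∈ E, ∃ X ∈ 𝒳, ∀ v ∈ e, v ∈ X

/-- `𝒳` is `t`-thin: any two distinct members intersect in at most `t` vertices. -/
def Thin (t : ℕ) (𝒳 : Finset (Finset α)) : Prop :=
  ∀ X ∈ 𝒳, ∀ Y ∈ 𝒳, X ≠ Y → (X ∩ Y).card ≤ t

/-- `(V, F)` is a maximal `d`-sparse (spanning) subgraph of `(V, E)`. -/
noncomputable def MaxSparse (d : ℕ) (V : Finset α) (E F : Finset (Sym2 α)) : Prop :=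
  F ⊆ E ∧ Sparse d V F ∧ ∀ e ∈ E, e ∉ F → ¬ Sparse d V (insert e F)

theorem Sym2.toFinset_injective {α : Type*} [DecidableEq α] :
    Function.Injective (Sym2.toFinset : Sym2 α → Finset α) :=
  fun _ _ h => Sym2.ext fun v => by rw [← Sym2.mem_toFinset, h, Sym2.mem_toFinset]

theorem Sym2.toFinset_subset_iff {α : Type*} [DecidableEq α] {e : Sym2 α} {X : Finset α} :
    e.toFinset ⊆ X ↔ ∀ v ∈ e, v ∈ X := by
  simp [Finset.subset_iff]

theorem ValidOn.toFinset_mem_powersetCard {α : Type*} [DecidableEq α] {V : Finset α}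
    {E : Finset (Sym2 α)} (hval : ValidOn V E) {e : Sym2 α} (he : e ∈ E) :
    e.toFinset ∈ V.powersetCard 2 :=
  mem_powersetCard.2
    ⟨Sym2.toFinset_subset_iff.2 (hval e he).2, Sym2.card_toFinset_of_not_isDiag e (hval e he).1⟩

namespace CriticalCover

variable {α : Type*} {d k : ℕ} {V X Y T : Finset α} {E : Finset (Sym2 α)} {𝒳 : Finset (Finset α)}

theorem inducedEdges_mono (h : X ⊆ Y) : inducedEdges E X ⊆ inducedEdges E Y := fun _ he =>
  mem_filter.2 ⟨(mem_filter.1 he).1, fun v hv => h ((mem_filter.1 he).2 v hv)⟩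

def IsTight (d : ℕ) (E : Finset (Sym2 α)) (X : Finset α) : Prop :=
  iG E X + (d + 1).choose 2 = d * X.card

theorem critSubgraph_inducedEdges (hXV : X ⊆ V) (hX : d + 2 ≤ X.card) (hXt : IsTight d E X) :
    CritSubgraph d V E X (inducedEdges E X) :=
  ⟨⟨hXV, filter_subset _ _, fun _ he => (mem_filter.1 he).2⟩, Or.inr ⟨hX, hXt⟩⟩

theorem CritComponent.eq_of_subset (hX : CritComponent d V E X (inducedEdges E X))
    (hY : CritSubgraph d V E Y (inducedEdges E Y)) (hXY : X ⊆ Y) : X = Y :=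
  (hX.2 Y _ hY hXY (inducedEdges_mono hXY)).1

theorem subset_of_mem_critCover (hX : X ∈ critCover d V E) : X ⊆ V :=
  mem_powerset.1 (mem_filter.1 hX).1

theorem IsSubgraph.subset_inducedEdges {U : Finset α} {F : Finset (Sym2 α)}
    (h : IsSubgraph V E U F) : F ⊆ inducedEdges E U :=
  fun e he => mem_filter.2 ⟨h.2.1 he, h.2.2 e he⟩

theorem isTight_of_critical {F : Finset (Sym2 α)} (hsp : Sparse d V E) (hXV : X ⊆ V)
    (hX : d + 2 ≤ X.card) (hF : Critical d X F) (hFE : F ⊆ inducedEdges E X) :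
    IsTight d E X := by
  have hFi : F.card ≤ iG E X := card_le_card hFE
  have hsX := hsp X hXV (by omega)
  rcases hF with ⟨hX2, hF1⟩ | ⟨-, hF⟩
  · obtain rfl : d = 0 := by omega
    simp only [zero_mul, nonpos_iff_eq_zero, add_eq_zero] at hsX
    omega
  · unfold IsTight
    omega

theorem isTight_of_mem_critCover (hsp : Sparse d V E)
    (hbig : ∀ U F, CritComponent d V E U F → d + 2 ≤ U.card) (hX : X ∈ critCover d V E) :
    IsTight d E X := by
  obtain ⟨F, hF⟩ := (mem_filter.1 hX).2
  exact isTight_of_critical hsp hF.1.1.1 (hbig X F hF) hF.1.2 (IsSubgraph.subset_inducedEdges hF.1.1)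

theorem critComponent_inducedEdges (hsp : Sparse d V E)
    (hbig : ∀ U F, CritComponent d V E U F → d + 2 ≤ U.card) (hX : X ∈ critCover d V E) :
    CritComponent d V E X (inducedEdges E X) := by
  obtain ⟨F, hF⟩ := (mem_filter.1 hX).2
  have hsub := critSubgraph_inducedEdges hF.1.1.1 (hbig X F hF)
    (isTight_of_mem_critCover hsp hbig hX)
  rwa [← (hF.2 X _ hsub subset_rfl (IsSubgraph.subset_inducedEdges hF.1.1)).2]

def IsTightFamily (d : ℕ) (V : Finset α) (E : Finset (Sym2 α)) (𝒳 : Finset (Finset α)) : Prop :=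
  ∀ X ∈ 𝒳, X ⊆ V ∧ d ≤ X.card ∧ IsTight d E X

theorem isTightFamily_critCover (hsp : Sparse d V E)
    (hbig : ∀ U F, CritComponent d V E U F → d + 2 ≤ U.card) :
    IsTightFamily d V E (critCover d V E) := fun X hX =>
  ⟨subset_of_mem_critCover hX, by have := hbig _ _ (critComponent_inducedEdges hsp hbig hX); omega,
    isTight_of_mem_critCover hsp hbig hX⟩

variable [DecidableEq α]

theorem mem_inducedEdges {e : Sym2 α} : e ∈ inducedEdges E X ↔ e ∈ E ∧ e.toFinset ⊆ X := by
  rw [inducedEdges, mem_filter, Sym2.toFinset_subset_iff]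

theorem inducedEdges_inter : inducedEdges E (X ∩ Y) = inducedEdges E X ∩ inducedEdges E Y := by
  ext e
  simp only [mem_inter, mem_inducedEdges, subset_inter_iff]
  tauto

theorem iG_add_iG_le_iG_union_add_iG_inter :
    iG E X + iG E Y ≤ iG E (X ∪ Y) + iG E (X ∩ Y) := by
  rw [iG, iG, iG, iG, inducedEdges_inter, ← card_union_add_card_inter]
  gcongr
  exact union_subset (inducedEdges_mono subset_union_left) (inducedEdges_mono subset_union_right)

theorem IsTight.union (hsp : Sparse d V E) (hXV : X ⊆ V) (hYV : Y ⊆ V) (hX : IsTight d E X)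
    (hY : IsTight d E Y) (hXY : d ≤ (X ∩ Y).card) : IsTight d E (X ∪ Y) := by
  have hinter := hsp _ (inter_subset_left.trans hXV) hXY
  have hunion := hsp _ (union_subset hXV hYV)
    (hXY.trans (card_le_card (inter_subset_left.trans subset_union_left)))
  have hcard := congrArg (d * ·) (card_union_add_card_inter X Y)
  simp only [mul_add] at hcard
  unfold IsTight at *
  linarith [iG_add_iG_le_iG_union_add_iG_inter (E := E) (X := X) (Y := Y)]

theorem card_inter_lt_of_mem_critCover (hsp : Sparse d V E)
    (hbig : ∀ U F, CritComponent d V E U F → d + 2 ≤ U.card) (hX : X ∈ critCover d V E)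
    (hY : Y ∈ critCover d V E) (hXY : X ≠ Y) : (X ∩ Y).card < d := by
  by_contra! h
  have hXYV := union_subset (subset_of_mem_critCover hX) (subset_of_mem_critCover hY)
  have hsub := critSubgraph_inducedEdges hXYV
    ((hbig _ _ (critComponent_inducedEdges hsp hbig hX)).trans (card_le_card subset_union_left))
    ((isTight_of_mem_critCover hsp hbig hX).union hsp (subset_of_mem_critCover hX)
      (subset_of_mem_critCover hY) (isTight_of_mem_critCover hsp hbig hY) h)
  exact hXY <|
    (CritComponent.eq_of_subset (critComponent_inducedEdges hsp hbig hX) hsub subset_union_left).trans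
      (CritComponent.eq_of_subset (critComponent_inducedEdges hsp hbig hY) hsub subset_union_right).symm

theorem degX_critCover_le_one (hsp : Sparse d V E)
    (hbig : ∀ U F, CritComponent d V E U F → d + 2 ≤ U.card) (hT : d ≤ T.card) :
    degX (critCover d V E) T ≤ 1 := by
  refine card_le_one.2 fun X hX Y hY => ?_
  by_contra hXY
  have := card_inter_lt_of_mem_critCover hsp hbig (mem_filter.1 hX).1 (mem_filter.1 hY).1 hXY
  have := card_le_card (subset_inter (mem_filter.1 hX).2 (mem_filter.1 hY).2)
  omega

theorem critSubgraph_edge (hval : ValidOn V E) {e : Sym2 α} (he : e ∈ E) :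
    CritSubgraph d V E e.toFinset {e} :=
  ⟨⟨Sym2.toFinset_subset_iff.2 (hval e he).2, singleton_subset_iff.2 he,
      fun _ he' _ hv => Sym2.mem_toFinset.2 (mem_singleton.1 he' ▸ hv)⟩,
    Or.inl ⟨Sym2.card_toFinset_of_not_isDiag _ (hval e he).1, card_singleton e⟩⟩

/-- A critical subgraph maximising `|U| + |F|` is a component. -/
theorem critCover_nonempty (hval : ValidOn V E) (hE : E.Nonempty) :
    (critCover d V E).Nonempty := by
  obtain ⟨e, he⟩ := hE
  set S := (V.powerset ×ˢ E.powerset).filter fun p => CritSubgraph d V E p.1 p.2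
  have mem_S {U F} (h : CritSubgraph d V E U F) : (U, F) ∈ S :=
    mem_filter.2 ⟨mem_product.2 ⟨mem_powerset.2 h.1.1, mem_powerset.2 h.1.2.1⟩, h⟩
  obtain ⟨⟨U, F⟩, hp, hmax⟩ :=
    exists_max_image S (fun p => p.1.card + p.2.card) ⟨_, mem_S (critSubgraph_edge hval he)⟩
  have hUF := (mem_filter.1 hp).2
  refine ⟨U, mem_filter.2 ⟨mem_powerset.2 hUF.1.1, F, hUF, fun U' F' h hU hF => ?_⟩⟩
  have := hmax _ (mem_S h)
  have := card_le_card hU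
  have := card_le_card hF
  exact ⟨eq_of_subset_of_card_le hU (by simp only at *; omega),
    eq_of_subset_of_card_le hF (by simp only at *; omega)⟩

theorem sum_eq_card_filter_ne_zero_add_sum_sub_one {ι : Type*} (s : Finset ι) (f : ι → ℕ) :
    ∑ i ∈ s, f i = #{i ∈ s | f i ≠ 0} + ∑ i ∈ s, (f i - 1) := by
  rw [card_filter, ← sum_add_distrib]
  refine sum_congr rfl fun i _ => ?_
  split_ifs <;> omega

theorem sum_card_eq_sum_degX_singleton {V : Finset α} {𝒜 : Finset (Finset α)}
    (h𝒜 : ∀ X ∈ 𝒜, X ⊆ V) : ∑ X ∈ 𝒜, X.card = ∑ v ∈ V, degX 𝒜 {v} :=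
  calc ∑ X ∈ 𝒜, X.card = ∑ X ∈ 𝒜, #{v ∈ V | {v} ⊆ X} := sum_congr rfl fun X hX => by
        simp_rw [singleton_subset_iff, filter_mem_eq_inter, inter_eq_right.2 (h𝒜 X hX)]
    _ = _ := (sum_card_bipartiteAbove_eq_sum_card_bipartiteBelow (s := 𝒜) (t := V)
        (r := fun X v => {v} ⊆ X) :)

theorem sum_iG_eq_sum_degX_toFinset (E : Finset (Sym2 α)) (𝒜 : Finset (Finset α)) :
    ∑ X ∈ 𝒜, iG E X = ∑ e ∈ E, degX 𝒜 e.toFinset :=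
  calc ∑ X ∈ 𝒜, iG E X = ∑ X ∈ 𝒜, #{e ∈ E | e.toFinset ⊆ X} := by
        simp_rw [iG, inducedEdges, Sym2.toFinset_subset_iff]
    _ = _ := (sum_card_bipartiteAbove_eq_sum_card_bipartiteBelow (s := 𝒜) (t := E)
        (r := fun X e => e.toFinset ⊆ X) :)

theorem mul_sum_degX_singleton_sub_one_le {d : ℕ} {V : Finset α} {E : Finset (Sym2 α)}
    (hval : ValidOn V E) (hsp : Sparse d V E) {𝒜 : Finset (Finset α)}
    (h𝒜 : IsTightFamily d V E 𝒜) :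
    d * ∑ v ∈ V, (degX 𝒜 {v} - 1) ≤
      (d + 1).choose 2 * (𝒜.card - 1) + ∑ e ∈ E, (degX 𝒜 e.toFinset - 1) := by
  obtain rfl | ⟨X₀, hX₀⟩ := 𝒜.eq_empty_or_nonempty
  · simp [degX]
  have hvert := (sum_card_eq_sum_degX_singleton fun X hX => (h𝒜 X hX).1).trans
    (sum_eq_card_filter_ne_zero_add_sum_sub_one _ _)
  have hedge := (sum_iG_eq_sum_degX_toFinset E 𝒜).trans
    (sum_eq_card_filter_ne_zero_add_sum_sub_one _ _)
  set W := {v ∈ V | degX 𝒜 {v} ≠ 0}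
  have hcovered : {e ∈ E | degX 𝒜 e.toFinset ≠ 0} ⊆ inducedEdges E W := by
    intro e he
    obtain ⟨he, hdeg⟩ := mem_filter.1 he
    obtain ⟨X, hX⟩ := card_ne_zero.1 hdeg
    refine mem_inducedEdges.2 ⟨he, fun v hv => mem_filter.2 ⟨?_, card_ne_zero_of_mem (a := X) ?_⟩⟩
    · exact (hval e he).2 v (Sym2.mem_toFinset.1 hv)
    · exact mem_filter.2 ⟨(mem_filter.1 hX).1, singleton_subset_iff.2 ((mem_filter.1 hX).2 hv)⟩
  have hW : d ≤ #W := (h𝒜 X₀ hX₀).2.1.trans <| card_le_card fun v hv =>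
    mem_filter.2 ⟨(h𝒜 X₀ hX₀).1 hv,
      card_ne_zero_of_mem (mem_filter.2 ⟨hX₀, singleton_subset_iff.2 hv⟩)⟩
  have htight : ∑ X ∈ 𝒜, iG E X + (d + 1).choose 2 * #𝒜 = d * ∑ X ∈ 𝒜, X.card := by
    rw [mul_sum, mul_comm, ← smul_eq_mul, ← sum_const, ← sum_add_distrib]
    exact sum_congr rfl fun X hX => (h𝒜 X hX).2.2
  have hsW := hsp W (filter_subset _ _) hW
  have hcov := card_le_card hcovered
  obtain ⟨m, hm⟩ : ∃ m, #𝒜 = m + 1 := ⟨#𝒜 - 1, by have := card_pos.2 ⟨X₀, hX₀⟩; omega⟩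
  rw [hm, Nat.add_sub_cancel]
  rw [hm, hvert, hedge] at htight
  unfold iG at hsW
  linarith

theorem sum_powersetCard_sum_powersetCard_sdiff {M : Type*} [AddCommMonoid M] (V : Finset α)
    (k j : ℕ) (g : Finset α → M) :
    ∑ T ∈ V.powersetCard k, ∑ B ∈ (V \ T).powersetCard j, g (T ∪ B) =
      (k + j).choose j • ∑ S ∈ V.powersetCard (k + j), g S := by
  have hfib : ∀ S ∈ V.powersetCard (k + j), (k + j).choose j • g S =
      ∑ B ∈ S.powersetCard j, g S := by
    intro S hS
    rw [sum_const, card_powersetCard, (mem_powersetCard.1 hS).2]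
  rw [smul_sum, sum_congr rfl hfib, sum_sigma', sum_sigma']
  refine sum_nbij' (fun p => ⟨p.1 ∪ p.2, p.2⟩) (fun p => ⟨p.1 \ p.2, p.2⟩) ?_ ?_ ?_ ?_ ?_
  · rintro ⟨T, B⟩ h
    simp only [mem_sigma, mem_powersetCard, subset_sdiff] at h ⊢
    refine ⟨⟨union_subset h.1.1 h.2.1.1, ?_⟩, subset_union_right, h.2.2⟩
    rw [card_union_of_disjoint h.2.1.2.symm, h.1.2, h.2.2]
  · rintro ⟨S, B⟩ h
    simp only [mem_sigma, mem_powersetCard, subset_sdiff] at h ⊢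
    refine ⟨⟨sdiff_subset.trans h.1.1, ?_⟩, ⟨h.2.1.trans h.1.1, disjoint_sdiff_self_right⟩, h.2.2⟩
    rw [card_sdiff_of_subset h.2.1, h.1.2, h.2.2, Nat.add_sub_cancel]
  · rintro ⟨T, B⟩ h
    simp only [mem_sigma, mem_powersetCard, subset_sdiff] at h
    simp [union_sdiff_cancel_right h.2.1.2.symm]
  · rintro ⟨S, B⟩ h
    simp only [mem_sigma, mem_powersetCard] at h
    simp [sdiff_union_of_subset h.2.1]
  · intro _ _
    rfl

theorem degX_filter_subset (𝒳 : Finset (Finset α)) (T S : Finset α) :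
    degX {X ∈ 𝒳 | T ⊆ X} S = degX 𝒳 (T ∪ S) := by
  simp only [degX, filter_filter, union_subset_iff]

theorem sum_singleton_union_eq (hT : T ⊆ V) (g : Finset α → ℕ) :
    ∑ v ∈ V, g (T ∪ {v}) = T.card * g T + ∑ B ∈ (V \ T).powersetCard 1, g (T ∪ B) := by
  rw [← sum_sdiff hT, powersetCard_one, sum_map, add_comm]
  congr 1
  rw [sum_congr rfl fun v hv => by rw [union_eq_left.2 (singleton_subset_iff.2 hv)], sum_const,
    smul_eq_mul]

/-- An edge `e` meeting `V \ T` in a given `i`-set `B` is determined by `e ∩ T`, a `(2 - i)`-subset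
of `T`. -/
theorem sum_filter_card_sdiff_eq_le (hval : ValidOn V E) (T : Finset α) (i : ℕ)
    (g : Finset α → ℕ) :
    ∑ e ∈ E with #(e.toFinset \ T) = i, g (T ∪ e.toFinset) ≤
      T.card.choose (2 - i) * ∑ B ∈ (V \ T).powersetCard i, g (T ∪ B) := by
  have hmaps : ∀ e ∈ {e ∈ E | #(e.toFinset \ T) = i}, e.toFinset \ T ∈ (V \ T).powersetCard i :=
    fun e he => mem_powersetCard.2 ⟨sdiff_subset_sdiff (mem_powersetCard.1
      (hval.toFinset_mem_powersetCard (mem_filter.1 he).1)).1 subset_rfl, (mem_filter.1 he).2⟩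
  have hfiber (B : Finset α) :
      #{e ∈ E | #(e.toFinset \ T) = i ∧ e.toFinset \ T = B} ≤ T.card.choose (2 - i) := by
    rw [← card_powersetCard]
    refine card_le_card_of_injOn (fun e => e.toFinset ∩ T) (fun e he => ?_) fun e he e' he' h => ?_
    · obtain ⟨heE, hei, -⟩ := mem_filter.1 he
      have := card_inter_add_card_sdiff e.toFinset T
      rw [(mem_powersetCard.1 (hval.toFinset_mem_powersetCard heE)).2] at this
      exact mem_powersetCard.2 ⟨inter_subset_right, by dsimp only; omega⟩
    · obtain ⟨heE, -, heB⟩ := mem_filter.1 he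
      obtain ⟨he'E, -, he'B⟩ := mem_filter.1 he'
      apply Sym2.toFinset_injective
      rw [← sdiff_union_inter e.toFinset T, ← sdiff_union_inter e'.toFinset T, heB, he'B]
      exact congrArg (B ∪ ·) h
  calc ∑ e ∈ E with #(e.toFinset \ T) = i, g (T ∪ e.toFinset)
      = ∑ e ∈ E with #(e.toFinset \ T) = i, g (T ∪ (e.toFinset \ T)) := by
        simp_rw [union_sdiff_self_eq_union]
    _ = ∑ B ∈ (V \ T).powersetCard i,
          ∑ e ∈ E with #(e.toFinset \ T) = i ∧ e.toFinset \ T = B, g (T ∪ B) := by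
        simp_rw [← filter_filter]
        exact (sum_fiberwise_of_maps_to' hmaps (fun B => g (T ∪ B))).symm
    _ ≤ ∑ B ∈ (V \ T).powersetCard i, T.card.choose (2 - i) * g (T ∪ B) := by
        gcongr with B
        rw [sum_const, smul_eq_mul]
        exact Nat.mul_le_mul_right _ (hfiber B)
    _ = _ := (mul_sum ..).symm

theorem sum_edges_union_le (hval : ValidOn V E) (T : Finset α) (g : Finset α → ℕ) :
    ∑ e ∈ E, g (T ∪ e.toFinset) ≤
      ∑ i ∈ range 3, T.card.choose (2 - i) * ∑ B ∈ (V \ T).powersetCard i, g (T ∪ B) := by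
  have hmaps : ∀ e ∈ E, #(e.toFinset \ T) ∈ range 3 := fun e he => by
    have := card_le_card (sdiff_subset (s := e.toFinset) (t := T))
    rw [(mem_powersetCard.1 (hval.toFinset_mem_powersetCard he)).2] at this
    exact mem_range.2 (by omega)
  rw [← sum_fiberwise_of_maps_to hmaps]
  exact sum_le_sum fun i _ => sum_filter_card_sdiff_eq_le hval T i g

/-- Truncated subtraction: a `k`-set lying in no member contributes `0`, not `-1`. -/
noncomputable def excess (V : Finset α) (𝒳 : Finset (Finset α)) (k : ℕ) : ℕ :=
  ∑ T ∈ V.powersetCard k, (degX 𝒳 T - 1)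

theorem excess_zero (V : Finset α) (𝒳 : Finset (Finset α)) : excess V 𝒳 0 = 𝒳.card - 1 := by
  simp [excess, degX]

theorem sum_theta_degX_le (V : Finset α) (𝒳 : Finset (Finset α)) (k : ℕ) :
    ∑ U ∈ theta V 𝒳 k, degX 𝒳 U ≤ 2 * excess V 𝒳 k := by
  rw [excess, mul_sum]
  calc ∑ U ∈ theta V 𝒳 k, degX 𝒳 U ≤ ∑ U ∈ theta V 𝒳 k, 2 * (degX 𝒳 U - 1) :=
        sum_le_sum fun U hU => by have := (mem_filter.1 hU).2.2; omega
    _ ≤ _ := sum_le_sum_of_subset fun U hU =>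
        mem_powersetCard.2 ⟨mem_powerset.1 (mem_filter.1 hU).1, (mem_filter.1 hU).2.1⟩

theorem excess_critCover_eq_zero (hsp : Sparse d V E)
    (hbig : ∀ U F, CritComponent d V E U F → d + 2 ≤ U.card) (hk : d ≤ k) :
    excess V (critCover d V E) k = 0 :=
  sum_eq_zero fun T hT => by
    have := degX_critCover_le_one hsp hbig ((mem_powersetCard.1 hT).2 ▸ hk)
    omega

/-- `mul_sum_degX_singleton_sub_one_le` for the link `{X ∈ 𝒳 | T ⊆ X}`, with vertices and edges
sorted by the number `i` of their vertices outside `T`. -/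
theorem link_excess_le (hval : ValidOn V E) (hsp : Sparse d V E)
    (h𝒳 : IsTightFamily d V E 𝒳) (hT : T ∈ V.powersetCard k) :
    d * (k * (degX 𝒳 T - 1) + ∑ B ∈ (V \ T).powersetCard 1, (degX 𝒳 (T ∪ B) - 1)) ≤
      (d + 1).choose 2 * (degX 𝒳 T - 1) +
        ∑ i ∈ range 3, k.choose (2 - i) * ∑ B ∈ (V \ T).powersetCard i, (degX 𝒳 (T ∪ B) - 1) := by
  obtain ⟨hTV, rfl⟩ := mem_powersetCard.1 hT
  have := mul_sum_degX_singleton_sub_one_le hval hsp (𝒜 := {X ∈ 𝒳 | T ⊆ X})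
    fun X hX => h𝒳 X (mem_filter.1 hX).1
  simp_rw [degX_filter_subset] at this
  rw [← sum_singleton_union_eq hTV fun S => degX 𝒳 S - 1]
  exact this.trans (Nat.add_le_add_left (sum_edges_union_le hval T fun S => degX 𝒳 S - 1) _)

theorem excess_recurrence (hval : ValidOn V E) (hsp : Sparse d V E)
    (h𝒳 : IsTightFamily d V E 𝒳) (k : ℕ) :
    d * (k * excess V 𝒳 k + (k + 1) * excess V 𝒳 (k + 1)) ≤
      ((d + 1).choose 2 + k.choose 2) * excess V 𝒳 k + k * ((k + 1) * excess V 𝒳 (k + 1)) +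
        (k + 2).choose 2 * excess V 𝒳 (k + 2) := by
  have hsum (i : ℕ) : ∑ T ∈ V.powersetCard k, ∑ B ∈ (V \ T).powersetCard i,
      (degX 𝒳 (T ∪ B) - 1) = (k + i).choose i * excess V 𝒳 (k + i) :=
    sum_powersetCard_sum_powersetCard_sdiff V k i fun S => degX 𝒳 S - 1
  have := sum_le_sum fun T (hT : T ∈ V.powersetCard k) => link_excess_le hval hsp h𝒳 hT
  simp only [← mul_sum, sum_add_distrib] at this
  rw [sum_comm, hsum 1] at this
  simp only [← mul_sum, hsum, sum_range_succ, sum_range_zero] at this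
  change _ * (_ * excess V 𝒳 k + _) ≤ _ * excess V 𝒳 k + _ at this
  simp only [Nat.choose_one_right, Nat.choose_zero_right, Nat.add_zero, zero_add, one_mul,
    Nat.sub_zero, Nat.reduceSub] at this
  linarith

theorem succ_mul_excess_le (hval : ValidOn V E) (hsp : Sparse d V E)
    (h𝒳 : IsTightFamily d V E 𝒳)
    (hvanish : ∀ j, d < j → excess V 𝒳 j = 0) (k : ℕ) :
    (k + 1) * excess V 𝒳 (k + 1) ≤ (d - k) * excess V 𝒳 k := by
  rcases le_or_gt d k with hdk | hkd
  · simp [hvanish (k + 1) (by omega)]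
  have ih := succ_mul_excess_le hval hsp h𝒳 hvanish (k + 1)
  have hc := excess_recurrence hval hsp h𝒳 k
  obtain ⟨a, rfl⟩ : ∃ a, d = k + a + 1 := ⟨d - k - 1, by omega⟩
  rw [show k + a + 1 - (k + 1) = a by omega] at ih
  rw [show k + a + 1 - k = a + 1 by omega]
  have choose_two (m : ℕ) : (m + 1).choose 2 * 2 = (m + 1) * m := by
    rw [← Nat.add_one_mul_choose_eq, Nat.choose_one_right]
  have hck : (k + 1).choose 2 = k.choose 2 + k := by
    rw [Nat.choose_succ_succ', Nat.choose_one_right, add_comm]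
  have := choose_two (k + a + 1)
  have := choose_two k
  have := choose_two (k + 1)
  -- twice the recurrence plus `k + 1` times `ih` is `a + 2` times the goal
  refine Nat.le_of_mul_le_mul_left (c := a + 2) ?_ (by omega)
  nlinarith
termination_by d - k

end CriticalCover

/-- the total number of (1-hinge, component) incidences is less than `2d |𝒳|`. -/
theorem stmt9 (d : ℕ) (hd : 2 ≤ d)
    (V : Finset α) (E : Finset (Sym2 α)) (hval : ValidOn V E) (hsp : Sparse d V E)
    (hEne : E.Nonempty)
    (𝒳 : Finset (Finset α)) (h𝒳 : 𝒳 = critCover d V E)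
    (hbig : ∀ U F, CritComponent d V E U F → d + 2 ≤ U.card) :
    ∑ U ∈ theta V 𝒳 1, degX 𝒳 U < 2 * d * 𝒳.card := by
  subst h𝒳
  open CriticalCover in
  calc ∑ U ∈ theta V (critCover d V E) 1, degX (critCover d V E) U
      ≤ 2 * excess V (critCover d V E) 1 := sum_theta_degX_le _ _ 1
    _ ≤ 2 * (d * ((critCover d V E).card - 1)) := by
      have := succ_mul_excess_le hval hsp (isTightFamily_critCover hsp hbig)
        (fun j hj => excess_critCover_eq_zero hsp hbig hj.le) 0
      rw [excess_zero, zero_add, one_mul, Nat.sub_zero] at this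
      exact Nat.mul_le_mul_left 2 this
    _ < 2 * d * (critCover d V E).card := by
      have := card_pos.2 (critCover_nonempty (d := d) hval hEne)
      rw [← mul_assoc]
      exact Nat.mul_lt_mul_of_pos_left (by omega) (by omega)
end

section
/- Let G₁ and G₂ be two copies of the complete graph K₅ whose vertex sets intersect in exactly two vertices u and v, and let G be the graph obtained from G₁ ∪ G₂ by deleting the edge uv. Then G is a graph on 8 vertices with 18 edges and G is 3-sparse, i.e. every subset X of vertices with |X| ≥ 3 induces at most 3|X| − 6 edges of G. -/
open Finset
open scoped Classical

variable {α : Type*} [DecidableEq α]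

/-!
Deleting `uv` makes `K(V₁) - uv` and `K(V₂) - uv` edge-disjoint, so with `a = |X ∩ V₁|`,
`b = |X ∩ V₂|` and `c = |X ∩ {u, v}|` the set `X` has `|X| = a + b - c` vertices and induces
`C(a,2) + C(b,2)` edges, less `2` when `u, v ∈ X`. In that case `c = 2` and the bound reduces to
`C(a,2) + 5 ≤ 3a` for `2 ≤ a ≤ 5`. Otherwise `c ≤ 1`, and neither `V₁` nor `V₂` lies in `X`, so
`a, b ≤ 4`: a finite check.
-/

noncomputable def completeEdges (S : Finset α) : Finset (Sym2 α) :=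
  S.sym2.filter fun e => ¬ e.IsDiag

lemma mem_completeEdges {S : Finset α} {e : Sym2 α} :
    e ∈ completeEdges S ↔ (∀ x ∈ e, x ∈ S) ∧ ¬ e.IsDiag := by
  simp [completeEdges, mem_sym2_iff]

lemma mk_mem_completeEdges {S : Finset α} {u v : α} (huv : u ≠ v) :
    s(u, v) ∈ completeEdges S ↔ u ∈ S ∧ v ∈ S := by
  simp [mem_completeEdges, huv]

lemma card_completeEdges (S : Finset α) : #(completeEdges S) = (#S).choose 2 := by
  rw [completeEdges, sym2_eq_image, Sym2.filter_image_mk_not_isDiag, Sym2.card_image_offDiag]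

lemma completeEdges_inter (S T : Finset α) :
    completeEdges S ∩ completeEdges T = completeEdges (S ∩ T) := by
  ext e
  simp only [mem_inter, mem_completeEdges]
  grind

lemma completeEdges_pair {u v : α} (huv : u ≠ v) : completeEdges {u, v} = {s(u, v)} := by
  obtain ⟨e, he⟩ := card_eq_one.1 (by rw [card_completeEdges, card_pair huv]; rfl :
    #(completeEdges {u, v}) = 1)
  have huv_mem := (mk_mem_completeEdges huv).2
    ⟨mem_insert_self u {v}, mem_insert_of_mem (mem_singleton_self v)⟩
  rw [he, mem_singleton] at huv_mem
  rw [he, huv_mem]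

lemma inducedEdges_completeEdges_erase (S X : Finset α) (e : Sym2 α) :
    inducedEdges ((completeEdges S).erase e) X = (completeEdges (X ∩ S)).erase e := by
  ext f
  simp only [inducedEdges, mem_filter, mem_erase, mem_completeEdges, mem_inter]
  grind

lemma iG_union_of_disjoint {F G : Finset (Sym2 α)} (h : Disjoint F G) (X : Finset α) :
    iG (F ∪ G) X = iG F X + iG G X := by
  simp only [iG, inducedEdges, filter_union]
  exact card_union_of_disjoint (h.mono (filter_subset _ _) (filter_subset _ _))

lemma card_completeEdges_erase_add_one {S : Finset α} {u v : α} (huv : u ≠ v)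
    (hu : u ∈ S) (hv : v ∈ S) : #((completeEdges S).erase s(u, v)) + 1 = (#S).choose 2 := by
  rw [card_erase_add_one ((mk_mem_completeEdges huv).2 ⟨hu, hv⟩), card_completeEdges]

lemma iG_completeEdges_erase_add_one {S X : Finset α} {u v : α} (huv : u ≠ v)
    (hu : u ∈ X ∩ S) (hv : v ∈ X ∩ S) :
    iG ((completeEdges S).erase s(u, v)) X + 1 = (#(X ∩ S)).choose 2 := by
  rw [iG, inducedEdges_completeEdges_erase]
  exact card_completeEdges_erase_add_one huv hu hv

lemma iG_completeEdges_erase {S X : Finset α} {u v : α} (h : ¬ (u ∈ X ∧ v ∈ X)) :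
    iG ((completeEdges S).erase s(u, v)) X = (#(X ∩ S)).choose 2 := by
  have hnot : s(u, v) ∉ completeEdges (X ∩ S) := fun he =>
    h ⟨(mem_inter.1 ((mem_completeEdges.1 he).1 u (Sym2.mem_mk_left u v))).1,
      (mem_inter.1 ((mem_completeEdges.1 he).1 v (Sym2.mem_mk_right u v))).1⟩
  rw [iG, inducedEdges_completeEdges_erase, erase_eq_of_notMem hnot, card_completeEdges]

lemma card_inter_lt_of_not_and {S X : Finset α} {u v : α} (hu : u ∈ S) (hv : v ∈ S)
    (h : ¬ (u ∈ X ∧ v ∈ X)) : #(X ∩ S) < #S :=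
  card_lt_card ⟨inter_subset_right, fun hS => h ⟨(mem_inter.1 (hS hu)).1, (mem_inter.1 (hS hv)).1⟩⟩

lemma choose_two_add_five_le {a : ℕ} (h2 : 2 ≤ a) (h5 : a ≤ 5) : a.choose 2 + 5 ≤ 3 * a := by
  interval_cases a <;> decide

lemma choose_two_add_choose_two_add_six_le {a b c n : ℕ} (ha : a ≤ 4) (hb : b ≤ 4) (hc : c ≤ 1)
    (hca : c ≤ a) (hcb : c ≤ b) (hn : n + c = a + b) (h3 : 3 ≤ n) :
    a.choose 2 + b.choose 2 + 6 ≤ 3 * n := by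
  interval_cases a <;> interval_cases b <;> simp only [Nat.choose] <;> omega

section ParallelConnection

variable {V₁ V₂ : Finset α} {u v : α}

lemma disjoint_completeEdges_erase (huv : u ≠ v) (hint : V₁ ∩ V₂ = {u, v}) :
    Disjoint ((completeEdges V₁).erase s(u, v)) ((completeEdges V₂).erase s(u, v)) := by
  rw [disjoint_iff_inter_eq_empty, erase_inter, inter_erase, completeEdges_inter, hint,
    completeEdges_pair huv, erase_singleton, erase_empty]

lemma card_add_card_inter_pair {X : Finset α} (hint : V₁ ∩ V₂ = {u, v}) (hX : X ⊆ V₁ ∪ V₂) :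
    #X + #(X ∩ {u, v}) = #(X ∩ V₁) + #(X ∩ V₂) := by
  rw [← hint, inter_inter_distrib_left, ← card_union_add_card_inter (X ∩ V₁) (X ∩ V₂),
    ← inter_union_distrib_left, inter_eq_left.2 hX]

lemma sparse_three_completeEdges_erase_union (huv : u ≠ v) (hint : V₁ ∩ V₂ = {u, v})
    (hV₁ : #V₁ ≤ 5) (hV₂ : #V₂ ≤ 5) :
    Sparse 3 (V₁ ∪ V₂) ((completeEdges V₁).erase s(u, v) ∪ (completeEdges V₂).erase s(u, v)) := by
  intro X hX hX3
  rw [iG_union_of_disjoint (disjoint_completeEdges_erase huv hint),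
    show Nat.choose (3 + 1) 2 = 6 from rfl]
  obtain ⟨hu₁, hu₂⟩ := mem_inter.1 (show u ∈ V₁ ∩ V₂ by simp [hint])
  obtain ⟨hv₁, hv₂⟩ := mem_inter.1 (show v ∈ V₁ ∩ V₂ by simp [hint])
  have hcard := card_add_card_inter_pair hint hX
  have hc₁ : #(X ∩ {u, v}) ≤ #(X ∩ V₁) :=
    card_le_card (inter_subset_inter_left (hint ▸ inter_subset_left))
  have hc₂ : #(X ∩ {u, v}) ≤ #(X ∩ V₂) :=
    card_le_card (inter_subset_inter_left (hint ▸ inter_subset_right))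
  by_cases huvX : u ∈ X ∧ v ∈ X
  · have hpair : #(X ∩ {u, v}) = 2 := by
      rw [inter_eq_right.2 (insert_subset huvX.1 (singleton_subset_iff.2 huvX.2)), card_pair huv]
    have h₁ := iG_completeEdges_erase_add_one huv (mem_inter.2 ⟨huvX.1, hu₁⟩)
      (mem_inter.2 ⟨huvX.2, hv₁⟩)
    have h₂ := iG_completeEdges_erase_add_one huv (mem_inter.2 ⟨huvX.1, hu₂⟩)
      (mem_inter.2 ⟨huvX.2, hv₂⟩)
    have ha := choose_two_add_five_le (hpair ▸ hc₁) ((card_le_card inter_subset_right).trans hV₁)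
    have hb := choose_two_add_five_le (hpair ▸ hc₂) ((card_le_card inter_subset_right).trans hV₂)
    omega
  · have hc := card_inter_lt_of_not_and (mem_insert_self u {v})
      (mem_insert_of_mem (mem_singleton_self v)) huvX
    have ha := card_inter_lt_of_not_and hu₁ hv₁ huvX
    have hb := card_inter_lt_of_not_and hu₂ hv₂ huvX
    rw [card_pair huv] at hc
    rw [iG_completeEdges_erase huvX, iG_completeEdges_erase huvX]
    exact choose_two_add_choose_two_add_six_le (by omega) (by omega) (by omega) hc₁ hc₂ hcard hX3

end ParallelConnection

/-- the parallel connection of two copies of `K₅` along an edge `uv`, with the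
edge `uv` deleted, is a 3-sparse graph on 8 vertices with 18 edges. -/
theorem stmt17 (V₁ V₂ : Finset α) (u v : α) (huv : u ≠ v)
    (h₁ : V₁.card = 5) (h₂ : V₂.card = 5) (hint : V₁ ∩ V₂ = {u, v})
    (E : Finset (Sym2 α))
    (hE : E = ((V₁.sym2.filter fun e => ¬ e.IsDiag) ∪
                (V₂.sym2.filter fun e => ¬ e.IsDiag)).erase s(u, v)) :
    (V₁ ∪ V₂).card = 8 ∧ E.card = 18 ∧ Sparse 3 (V₁ ∪ V₂) E := by
  replace hE : E = (completeEdges V₁).erase s(u, v) ∪ (completeEdges V₂).erase s(u, v) := by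
    rw [hE, erase_union_distrib]; rfl
  obtain ⟨hu₁, hu₂⟩ := mem_inter.1 (show u ∈ V₁ ∩ V₂ by simp [hint])
  obtain ⟨hv₁, hv₂⟩ := mem_inter.1 (show v ∈ V₁ ∩ V₂ by simp [hint])
  refine ⟨?_, ?_, hE ▸ sparse_three_completeEdges_erase_union huv hint h₁.le h₂.le⟩
  · have := card_union_add_card_inter V₁ V₂
    rw [hint, card_pair huv, h₁, h₂] at this
    omega
  · have hE₁ := card_completeEdges_erase_add_one huv hu₁ hv₁
    have hE₂ := card_completeEdges_erase_add_one huv hu₂ hv₂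
    simp only [h₁, h₂, Nat.choose] at hE₁ hE₂
    rw [hE, card_union_of_disjoint (disjoint_completeEdges_erase huv hint)]
    omega
end
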